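/- Let w : ℝ_{>0} × ℝ_{>0} → [0, L] be scalable (w(cx,ca) = w(x,a) for c>0) with w(x,a) + w(a,x) = L, monotone nonincreasing in the first argument, and suppose there exists k > 1 such that w(x,a) > 0 for x < ka and w(x,a) = 0 for x > ka (for all a > 0). Then for every a > 0: ∫_0^∞ w(x,a) dx ≥ (L + g(k))·a, where g(k) = (4k²/(k+1)² − 1)·∫_{1/k}^{(k+1)/(2k)} w(1,y) dy > 0. -/

import Mathlib

open MeasureTheory Set

/-!
Scaling reduces the claim to `a = 1`. Put `f x = w x 1`; scalability gives `w 1 t = f t⁻¹`, so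
complementarity reads `f t + f t⁻¹ = L`. The substitution `x = t⁻¹` turns `∫_1^∞ f` into
`∫_0^1 t⁻² f t⁻¹`, hence
`∫_0^∞ f = ∫_0^1 (f t + t⁻² f t⁻¹) dt = L + ∫_0^1 (t⁻² - 1) f t⁻¹ dt`.
The last integrand is nonnegative, and on `(1/k, (k+1)/(2k)]` its weight `t⁻² - 1` is at least
`4k²/(k+1)² - 1`. Vanishing of `w` beyond the threshold makes everything integrable, and positivity
of `w` below it makes the gain positive.
-/

section Inversion

variable {E : Type*} [NormedAddCommGroup E] [NormedSpace ℝ E]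

lemma image_inv_Ioo_zero_one : (fun t : ℝ => t⁻¹) '' Ioo 0 1 = Ioi 1 := by
  rw [image_inv_eq_inv, inv_Ioo_0_left one_pos, inv_one]

lemma hasDerivWithinAt_inv_Ioo_zero_one :
    ∀ t ∈ Ioo (0 : ℝ) 1, HasDerivWithinAt (fun t => t⁻¹) (-(t ^ 2)⁻¹) (Ioo 0 1) t :=
  fun _ ht => (hasDerivAt_inv ht.1.ne').hasDerivWithinAt

theorem integral_Ioi_one_eq_integral_Ioo_inv (g : ℝ → E) :
    ∫ x in Ioi 1, g x = ∫ t in Ioo 0 1, (t ^ 2)⁻¹ • g t⁻¹ := by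
  rw [← image_inv_Ioo_zero_one, integral_image_eq_integral_abs_deriv_smul measurableSet_Ioo
    hasDerivWithinAt_inv_Ioo_zero_one inv_injective.injOn]
  simp only [abs_neg, abs_inv, abs_sq]

theorem integrableOn_Ioi_one_iff_integrableOn_Ioo_inv (g : ℝ → E) :
    IntegrableOn g (Ioi 1) ↔ IntegrableOn (fun t => (t ^ 2)⁻¹ • g t⁻¹) (Ioo 0 1) := by
  rw [← image_inv_Ioo_zero_one, integrableOn_image_iff_integrableOn_abs_deriv_smul
    measurableSet_Ioo hasDerivWithinAt_inv_Ioo_zero_one inv_injective.injOn]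
  simp only [abs_neg, abs_inv, abs_sq]

end Inversion

lemma integrableOn_Ioc_of_mem_Icc {f : ℝ → ℝ} {a b L : ℝ} (hf : Measurable f)
    (hb : ∀ x ∈ Ioc a b, f x ∈ Icc 0 L) : IntegrableOn f (Ioc a b) :=
  .of_bound measure_Ioc_lt_top hf.aestronglyMeasurable L <|
    (ae_restrict_iff' measurableSet_Ioc).2 <| .of_forall fun x hx => by
      rw [Real.norm_eq_abs, abs_of_nonneg (hb x hx).1]
      exact (hb x hx).2

theorem add_mul_integral_Ioc_inv_le_integral_Ioi {f : ℝ → ℝ} {L p m : ℝ}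
    (hf : IntegrableOn f (Ioi 0)) (hsymm : ∀ t ∈ Ioo (0 : ℝ) 1, f t + f t⁻¹ = L)
    (hnonneg : ∀ t ∈ Ioo (0 : ℝ) 1, 0 ≤ f t⁻¹) (hp : 0 ≤ p) (hm : m < 1) :
    L + ((m ^ 2)⁻¹ - 1) * ∫ t in Ioc p m, f t⁻¹ ≤ ∫ x in Ioi 0, f x := by
  have hsub : Ioc p m ⊆ Ioo 0 1 := fun t ht => ⟨hp.trans_lt ht.1, ht.2.trans_lt hm⟩
  have hf₀ : IntegrableOn f (Ioo 0 1) := hf.mono_set Ioo_subset_Ioi_self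
  have hf₁ : IntegrableOn (fun t => (t ^ 2)⁻¹ * f t⁻¹) (Ioo 0 1) :=
    (integrableOn_Ioi_one_iff_integrableOn_Ioo_inv f).1 (hf.mono_set (Ioi_subset_Ioi zero_le_one))
  have hL : IntegrableOn (fun _ => L) (Ioo (0 : ℝ) 1) := integrableOn_const measure_Ioo_lt_top.ne
  have hf_inv : IntegrableOn (fun t => f t⁻¹) (Ioo 0 1) :=
    (hL.sub hf₀).congr_fun (fun t ht => (eq_sub_of_add_eq' (hsymm t ht)).symm) measurableSet_Ioo
  set c := (m ^ 2)⁻¹ - 1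
  have hsplit : ∫ x in Ioi 0, f x = ∫ t in Ioo 0 1, (f t + (t ^ 2)⁻¹ * f t⁻¹) := by
    have hinv : ∫ x in Ioi 1, f x = ∫ t in Ioo 0 1, (t ^ 2)⁻¹ * f t⁻¹ :=
      integral_Ioi_one_eq_integral_Ioo_inv f
    rw [integral_add hf₀ hf₁, ← hinv,
      ← integral_Ioc_eq_integral_Ioo, ← setIntegral_union (Ioc_disjoint_Ioi le_rfl)
      measurableSet_Ioi (hf.mono_set Ioc_subset_Ioi_self) (hf.mono_set (Ioi_subset_Ioi zero_le_one)),
      Ioc_union_Ioi_eq_Ioi zero_le_one]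
  have hlower : ∫ t in Ioo 0 1, (L + c * (Ioc p m).indicator (fun t => f t⁻¹) t) =
      L + c * ∫ t in Ioc p m, f t⁻¹ := by
    rw [integral_add hL ((hf_inv.indicator measurableSet_Ioc).const_mul c),
      integral_const_mul, setIntegral_indicator measurableSet_Ioc, inter_eq_right.2 hsub]
    simp
  rw [hsplit, ← hlower]
  refine setIntegral_mono_on (hL.add
    ((hf_inv.indicator measurableSet_Ioc).const_mul c)) (hf₀.add hf₁) measurableSet_Ioo
    fun t ht => ?_
  have hft : f t = L - f t⁻¹ := eq_sub_of_add_eq (hsymm t ht)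
  have ht2 : 0 < t ^ 2 := pow_pos ht.1 2
  by_cases htI : t ∈ Ioc p m
  · have hc : c ≤ (t ^ 2)⁻¹ - 1 :=
      sub_le_sub_right (inv_anti₀ ht2 (pow_le_pow_left₀ ht.1.le htI.2 2)) 1
    rw [indicator_of_mem htI, hft]
    linarith [mul_le_mul_of_nonneg_right hc (hnonneg t ht)]
  · have hweight : 0 ≤ (t ^ 2)⁻¹ - 1 :=
      sub_nonneg.2 ((one_le_inv₀ ht2).2 (pow_le_one₀ ht.1.le ht.2.le))
    rw [indicator_of_notMem htI, hft]
    linarith [mul_nonneg hweight (hnonneg t ht)]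

lemma integrableOn_Ioi_zero_of_mem_Icc_of_eq_zero {f : ℝ → ℝ} {k L : ℝ} (hf : Measurable f)
    (hb : ∀ x ∈ Ioc 0 k, f x ∈ Icc 0 L) (hzero : ∀ x, k < x → f x = 0) :
    IntegrableOn f (Ioi 0) :=
  (integrableOn_Ioc_of_mem_Icc hf hb).of_forall_sdiff_eq_zero measurableSet_Ioi
    fun x hx => hzero x (lt_of_not_ge fun hxk => hx.2 ⟨hx.1, hxk⟩)

lemma integral_Ioc_pos_of_mem_Icc {f : ℝ → ℝ} {a b L : ℝ} (hf : Measurable f) (hab : a < b)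
    (hb : ∀ x ∈ Ioc a b, f x ∈ Icc 0 L) (hpos : ∀ x ∈ Ioo a b, 0 < f x) :
    0 < ∫ x in Ioc a b, f x := by
  rw [← intervalIntegral.integral_of_le hab.le]
  exact intervalIntegral.intervalIntegral_pos_of_pos_on
    ((intervalIntegrable_iff_integrableOn_Ioc_of_le hab.le).2 (integrableOn_Ioc_of_mem_Icc hf hb))
    hpos hab

def IsScalable (w : ℝ → ℝ → ℝ) : Prop :=
  ∀ c x a : ℝ, 0 < c → 0 < x → 0 < a → w (c * x) (c * a) = w x a

namespace IsScalable

variable {w : ℝ → ℝ → ℝ}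

lemma apply_inv_one (hw : IsScalable w) {t : ℝ} (ht : 0 < t) : w t⁻¹ 1 = w 1 t := by
  simpa [mul_inv_cancel₀ ht.ne'] using (hw t t⁻¹ 1 ht (inv_pos.2 ht) one_pos).symm

lemma integral_Ioi_zero (hw : IsScalable w) {a : ℝ} (ha : 0 < a) :
    ∫ x in Ioi 0, w x a = a * ∫ x in Ioi 0, w x 1 := by
  have hcongr : ∫ x in Ioi 0, w (a * x) a = ∫ x in Ioi 0, w x 1 :=
    setIntegral_congr_fun measurableSet_Ioi fun x hx => by simpa using hw a x 1 ha hx one_pos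
  have hcomp := integral_comp_mul_left_Ioi (fun x => w x a) 0 ha
  rw [mul_zero, hcongr, smul_eq_mul] at hcomp
  rw [hcomp, mul_inv_cancel_left₀ ha.ne']

end IsScalable

theorem scalable_IR_lower_bound_general (L : ℝ) (w : ℝ → ℝ → ℝ)
    (k : ℝ) (hk : 1 < k)
    (hmeas : Measurable (Function.uncurry w))
    (hrange : ∀ x a : ℝ, 0 < x → 0 < a → 0 ≤ w x a ∧ w x a ≤ L)
    (hscale : ∀ c x a : ℝ, 0 < c → 0 < x → 0 < a → w (c * x) (c * a) = w x a)
    (hsum : ∀ x a : ℝ, 0 < x → 0 < a → w x a + w a x = L)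
    (hpos : ∀ a x : ℝ, 0 < a → 0 < x → x < k * a → 0 < w x a)
    (hzero : ∀ a x : ℝ, 0 < a → k * a < x → w x a = 0) :
    0 < (4 * k ^ 2 / (k + 1) ^ 2 - 1) *
        ∫ y in Set.Ioc (1 / k) ((k + 1) / (2 * k)), w 1 y ∧
    ∀ a : ℝ, 0 < a →
      (L + (4 * k ^ 2 / (k + 1) ^ 2 - 1) *
          ∫ y in Set.Ioc (1 / k) ((k + 1) / (2 * k)), w 1 y) * a ≤
        ∫ x in Set.Ioi (0 : ℝ), w x a := by
  have hk0 : 0 < k := by linarith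
  set m := (k + 1) / (2 * k) with hm
  have hm0 : 0 < m := by positivity
  have hkm : 1 / k < m := by rw [div_lt_div_iff₀ hk0 (by positivity)]; nlinarith
  have hm1 : m < 1 := by rw [div_lt_one (by positivity)]; linarith
  have hr : 4 * k ^ 2 / (k + 1) ^ 2 = (m ^ 2)⁻¹ := by rw [hm]; field_simp; ring
  have hpos_of_mem {y : ℝ} (hy : 1 / k < y) : 0 < y := (one_div_pos.2 hk0).trans hy
  have hJ : ∫ y in Ioc (1 / k) m, w 1 y = ∫ t in Ioc (1 / k) m, w t⁻¹ 1 :=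
    setIntegral_congr_fun measurableSet_Ioc fun t ht =>
      (IsScalable.apply_inv_one hscale (hpos_of_mem ht.1)).symm
  have hgain : 0 < ((m ^ 2)⁻¹ - 1) * ∫ y in Ioc (1 / k) m, w 1 y := by
    refine mul_pos (sub_pos.2 ((one_lt_inv₀ (by positivity)).2 (pow_lt_one₀ hm0.le hm1 two_ne_zero)))
      (integral_Ioc_pos_of_mem_Icc (hmeas.comp (measurable_const.prodMk measurable_id)) hkm
        (fun y hy => hrange 1 y one_pos (hpos_of_mem hy.1))
        fun y hy => hpos y 1 (hpos_of_mem hy.1) one_pos ((div_lt_iff₀' hk0).1 hy.1))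
  rw [hr]
  refine ⟨hgain, fun a ha => ?_⟩
  rw [IsScalable.integral_Ioi_zero hscale ha, mul_comm]
  refine mul_le_mul_of_nonneg_left ?_ ha.le
  rw [hJ]
  refine add_mul_integral_Ioc_inv_le_integral_Ioi (f := (w · 1))
    (integrableOn_Ioi_zero_of_mem_Icc_of_eq_zero (hmeas.comp (measurable_id.prodMk measurable_const))
      (fun x hx => hrange x 1 hx.1 one_pos) fun x hx => hzero 1 x one_pos (by rwa [mul_one]))
    (fun t ht => ?_) (fun t ht => ?_) (by positivity) hm1
  · rw [IsScalable.apply_inv_one hscale ht.1]; exact hsum t 1 ht.1 one_pos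
  · rw [IsScalable.apply_inv_one hscale ht.1]; exact (hrange 1 t one_pos ht.1).1

/-- If `w` is a scalable, monotone nonincreasing two-machine allocation with
`w(x,a) + w(a,x) = L`, positive below the threshold `k·a` and vanishing above it,
then `∫_0^∞ w(x, a) dx ≥ (L + g(k))·a`, where
`g(k) = (4k²/(k+1)² − 1)·∫_{1/k}^{(k+1)/(2k)} w(1, y) dy > 0`. -/
theorem scalable_IR_lower_bound (L : ℝ) (hL : 0 < L) (w : ℝ → ℝ → ℝ)
    (k : ℝ) (hk : 1 < k)
    (hmeas : Measurable (Function.uncurry w))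
    (hrange : ∀ x a : ℝ, 0 < x → 0 < a → 0 ≤ w x a ∧ w x a ≤ L)
    (hscale : ∀ c x a : ℝ, 0 < c → 0 < x → 0 < a → w (c * x) (c * a) = w x a)
    (hsum : ∀ x a : ℝ, 0 < x → 0 < a → w x a + w a x = L)
    (hmono : ∀ a : ℝ, 0 < a → ∀ x y : ℝ, 0 < x → x ≤ y → w y a ≤ w x a)
    (hpos : ∀ a x : ℝ, 0 < a → 0 < x → x < k * a → 0 < w x a)
    (hzero : ∀ a x : ℝ, 0 < a → k * a < x → w x a = 0) :
    0 < (4 * k ^ 2 / (k + 1) ^ 2 - 1) *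
        ∫ y in Set.Ioc (1 / k) ((k + 1) / (2 * k)), w 1 y ∧
    ∀ a : ℝ, 0 < a →
      (L + (4 * k ^ 2 / (k + 1) ^ 2 - 1) *
          ∫ y in Set.Ioc (1 / k) ((k + 1) / (2 * k)), w 1 y) * a ≤
        ∫ x in Set.Ioi (0 : ℝ), w x a :=
  scalable_IR_lower_bound_general L w k hk hmeas hrange hscale hsum hpos hzero
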